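/- Let c > 1/2 and δ > 0 be fixed, and for k ≥ 1 set a_k = 2^k · Σ_{P ∈ 𝒫(k)} 2^{−#P} · δ^{#P − 2kc} · ∏_{B ∈ P} 1/(2c·#B − 1). Then there exists a constant M > 0 (depending only on c and δ) such that a_{k+1} ≤ M·(k+1)·a_k for all k ≥ 1; consequently the power series Σ_{k≥1} (a_k/k!)·t^k has a positive (or infinite) radius of convergence. -/

import Mathlib

/-!
Restricting a partition of `{1,…,k+1}` to `{1,…,k}` forgets only which block of the restriction
`Q` (if any) the new point joined, so at most `#Q + 1 ≤ k + 1` partitions restrict to `Q`.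
Adding the new point as a singleton multiplies the weight by `δ^{1-2c} / (2(2c-1))`; adding it
to a block multiplies it by at most `δ^{-2c}`, since `1/(2cm - 1)` decreases in `m`. Hence
`a_{k+1} ≤ M (k+1) a_k`, and the ratio test gives convergence of `∑ a_k t^k / k!` at `t = 1/(2M)`.
-/

/-- A finite collection `Q` of subsets of `{1,…,k}` is a set partition of `{1,…,k}` if its
blocks are nonempty and every element lies in exactly one block. -/
def IsSetPartition {k : ℕ} (Q : Finset (Finset (Fin k))) : Prop :=
  (∀ B ∈ Q, B.Nonempty) ∧ ∀ x : Fin k, ∃! B, B ∈ Q ∧ x ∈ B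

open scoped Classical in
/-- The moment `a_k = 2^k ∑_{P ∈ 𝒫(k)} 2^{-#P} δ^{#P - 2kc} ∏_{B ∈ P} (2c·#B - 1)⁻¹` of the
truncated random Dirichlet series `T(c,δ)`. -/
noncomputable def truncMoment (c δ : ℝ) (k : ℕ) : ℝ :=
  2 ^ k * ∑ Q : Finset (Finset (Fin k)),
    if IsSetPartition Q then
      ((2 : ℝ) ^ Q.card)⁻¹ * δ ^ ((Q.card : ℝ) - 2 * k * c) *
        ∏ B ∈ Q, 1 / (2 * c * (B.card : ℝ) - 1)
    else 0

open Finset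

namespace IsSetPartition

variable {k : ℕ} {Q : Finset (Finset (Fin k))}

lemma eq_of_mem_of_mem (hQ : IsSetPartition Q) {A B : Finset (Fin k)} (hA : A ∈ Q) (hB : B ∈ Q)
    {x : Fin k} (hxA : x ∈ A) (hxB : x ∈ B) : A = B :=
  (hQ.2 x).unique ⟨hA, hxA⟩ ⟨hB, hxB⟩

lemma card_le (hQ : IsSetPartition Q) : #Q ≤ k := by
  simpa using card_le_card_of_forall_subsingleton (t := univ) (fun B x => x ∈ B)
    (fun B hB => by simpa using (hQ.1 B hB).exists_mem)
    (fun x _ A ⟨hA, hxA⟩ B ⟨hB, hxB⟩ => hQ.eq_of_mem_of_mem hA hB hxA hxB)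

end IsSetPartition

section CastSuccBlocks

variable {k : ℕ}

noncomputable def castSuccPreimage (B : Finset (Fin (k + 1))) : Finset (Fin k) :=
  B.preimage Fin.castSucc (Fin.castSucc_injective k).injOn

@[simp] lemma mem_castSuccPreimage {B : Finset (Fin (k + 1))} {i : Fin k} :
    i ∈ castSuccPreimage B ↔ i.castSucc ∈ B :=
  mem_preimage

lemma last_notMem_map_castSuccEmb (A : Finset (Fin k)) : Fin.last k ∉ A.map Fin.castSuccEmb := by
  simp [Fin.castSucc_ne_last]

lemma map_castSuccPreimage {B : Finset (Fin (k + 1))} (h : Fin.last k ∉ B) :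
    (castSuccPreimage B).map Fin.castSuccEmb = B := by
  ext x
  induction x using Fin.lastCases <;> simp [h]

lemma insert_last_map_castSuccPreimage {B : Finset (Fin (k + 1))} (h : Fin.last k ∈ B) :
    insert (Fin.last k) ((castSuccPreimage B).map Fin.castSuccEmb) = B := by
  ext x
  induction x using Fin.lastCases <;> simp [h, Fin.castSucc_ne_last]

lemma castSuccPreimage_nonempty {B : Finset (Fin (k + 1))} (hB : B.Nonempty)
    (h : Fin.last k ∉ B) : (castSuccPreimage B).Nonempty := by
  obtain ⟨x, hx⟩ := hB
  induction x using Fin.lastCases with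
  | last => exact absurd hx h
  | cast i => exact ⟨i, mem_castSuccPreimage.2 hx⟩

end CastSuccBlocks

section Restriction

variable {k : ℕ}

noncomputable def restrictPartition (P : Finset (Finset (Fin (k + 1)))) :
    Finset (Finset (Fin k)) :=
  (P.image castSuccPreimage).erase ∅

def lastBlockTrace (P : Finset (Finset (Fin (k + 1)))) : Finset (Fin k) :=
  {i | ∃ B ∈ P, Fin.last k ∈ B ∧ i.castSucc ∈ B}

/-- Inverse of `P ↦ (restrictPartition P, lastBlockTrace P)`: the new point joins the block `S`,
or forms a singleton when `S = ∅`. -/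
def extendPartition (Q : Finset (Finset (Fin k))) (S : Finset (Fin k)) :
    Finset (Finset (Fin (k + 1))) :=
  insert (insert (Fin.last k) (S.map Fin.castSuccEmb))
    ((Q.erase S).map (mapEmbedding Fin.castSuccEmb).toEmbedding)

variable {P : Finset (Finset (Fin (k + 1)))}

lemma mem_restrictPartition {A : Finset (Fin k)} :
    A ∈ restrictPartition P ↔ A ≠ ∅ ∧ ∃ B ∈ P, castSuccPreimage B = A := by
  simp [restrictPartition]

lemma isSetPartition_restrictPartition (hP : IsSetPartition P) :
    IsSetPartition (restrictPartition P) := by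
  refine ⟨fun A hA => nonempty_iff_ne_empty.2 (mem_restrictPartition.1 hA).1, fun i => ?_⟩
  obtain ⟨B, ⟨hB, hiB⟩, -⟩ := hP.2 i.castSucc
  refine ⟨castSuccPreimage B, ⟨?_, mem_castSuccPreimage.2 hiB⟩, ?_⟩
  · exact mem_restrictPartition.2 ⟨ne_empty_of_mem (mem_castSuccPreimage.2 hiB), B, hB, rfl⟩
  · rintro A ⟨hA, hiA⟩
    obtain ⟨-, B', hB', rfl⟩ := mem_restrictPartition.1 hA
    rw [hP.eq_of_mem_of_mem hB' hB (mem_castSuccPreimage.1 hiA) hiB]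

lemma IsSetPartition.lastBlockTrace_eq (hP : IsSetPartition P) {B : Finset (Fin (k + 1))}
    (hB : B ∈ P) (hlast : Fin.last k ∈ B) : lastBlockTrace P = castSuccPreimage B := by
  ext i
  simp only [lastBlockTrace, mem_filter, mem_univ, true_and, mem_castSuccPreimage]
  constructor
  · rintro ⟨B', hB', hlast', hi⟩
    rwa [hP.eq_of_mem_of_mem hB hB' hlast hlast']
  · exact fun hi => ⟨B, hB, hlast, hi⟩

lemma IsSetPartition.lastBlockTrace_mem (hP : IsSetPartition P) :
    lastBlockTrace P ∈ insert ∅ (restrictPartition P) := by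
  obtain ⟨B, ⟨hB, hlast⟩, -⟩ := hP.2 (Fin.last k)
  rw [hP.lastBlockTrace_eq hB hlast, mem_insert, mem_restrictPartition]
  tauto

lemma IsSetPartition.extendPartition_restrictPartition (hP : IsSetPartition P) :
    extendPartition (restrictPartition P) (lastBlockTrace P) = P := by
  obtain ⟨L, ⟨hL, hlast⟩, -⟩ := hP.2 (Fin.last k)
  rw [hP.lastBlockTrace_eq hL hlast]
  ext B
  simp only [extendPartition, mem_insert, mem_map, mem_erase, mem_restrictPartition,
    RelEmbedding.coe_toEmbedding, mapEmbedding_apply]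
  constructor
  · rintro (rfl | ⟨-, ⟨hne, -, B', hB', rfl⟩, rfl⟩)
    · rwa [insert_last_map_castSuccPreimage hlast]
    · have hB'last : Fin.last k ∉ B' := fun h => hne (by rw [hP.eq_of_mem_of_mem hB' hL h hlast])
      rwa [map_castSuccPreimage hB'last]
  · intro hB
    by_cases hBlast : Fin.last k ∈ B
    · left
      rw [hP.eq_of_mem_of_mem hB hL hBlast hlast, insert_last_map_castSuccPreimage hlast]
    · obtain ⟨i, hi⟩ := castSuccPreimage_nonempty (hP.1 B hB) hBlast
      have hne : castSuccPreimage B ≠ castSuccPreimage L := fun h => hBlast <| by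
        rw [hP.eq_of_mem_of_mem hB hL (mem_castSuccPreimage.1 hi)
          (mem_castSuccPreimage.1 (h ▸ hi))]
        exact hlast
      exact Or.inr ⟨_, ⟨hne, ne_empty_of_mem hi, B, hB, rfl⟩, map_castSuccPreimage hBlast⟩

end Restriction

section Extension

variable {k : ℕ} (Q : Finset (Finset (Fin k))) (S : Finset (Fin k))

lemma insert_last_notMem_extendPartition :
    insert (Fin.last k) (S.map Fin.castSuccEmb) ∉
      (Q.erase S).map (mapEmbedding Fin.castSuccEmb).toEmbedding := by
  simp only [mem_map, RelEmbedding.coe_toEmbedding, mapEmbedding_apply, not_exists, not_and]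
  exact fun A _ h => last_notMem_map_castSuccEmb A (h ▸ mem_insert_self _ _)

lemma card_extendPartition : #(extendPartition Q S) = #(Q.erase S) + 1 := by
  rw [extendPartition, card_insert_of_notMem (insert_last_notMem_extendPartition Q S), card_map]

lemma prod_extendPartition {M : Type*} [CommMonoid M] (g : ℕ → M) :
    ∏ B ∈ extendPartition Q S, g #B = g (#S + 1) * ∏ A ∈ Q.erase S, g #A := by
  rw [extendPartition, prod_insert (insert_last_notMem_extendPartition Q S), prod_map,
    card_insert_of_notMem (last_notMem_map_castSuccEmb S), card_map]
  simp only [RelEmbedding.coe_toEmbedding, mapEmbedding_apply, card_map]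

end Extension

section Weight

variable {c δ : ℝ} {k : ℕ}

noncomputable def partitionWeight (c δ : ℝ) (k : ℕ) (Q : Finset (Finset (Fin k))) : ℝ :=
  ((2 : ℝ) ^ #Q)⁻¹ * δ ^ ((#Q : ℝ) - 2 * k * c) * ∏ B ∈ Q, 1 / (2 * c * (#B : ℝ) - 1)

lemma one_div_two_mul_sub_one_pos (hc : 1 / 2 < c) {m : ℕ} (hm : 1 ≤ m) :
    0 < 1 / (2 * c * (m : ℝ) - 1) := by
  have : (1 : ℝ) ≤ m := by exact_mod_cast hm
  have : 0 < 2 * c * (m : ℝ) - 1 := by nlinarith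
  positivity

lemma one_div_two_mul_succ_sub_one_le (hc : 1 / 2 < c) {m : ℕ} (hm : 1 ≤ m) :
    1 / (2 * c * ((m + 1 : ℕ) : ℝ) - 1) ≤ 1 / (2 * c * (m : ℝ) - 1) := by
  have : (1 : ℝ) ≤ m := by exact_mod_cast hm
  apply one_div_le_one_div_of_le (by nlinarith)
  push_cast
  nlinarith

lemma prod_one_div_two_mul_card_sub_one_nonneg {α : Type*} (hc : 1 / 2 < c)
    {Q : Finset (Finset α)} (hQ : ∀ B ∈ Q, B.Nonempty) :
    0 ≤ ∏ B ∈ Q, 1 / (2 * c * (#B : ℝ) - 1) :=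
  prod_nonneg fun B hB => (one_div_two_mul_sub_one_pos hc (card_pos.2 (hQ B hB))).le

lemma partitionWeight_nonneg (hc : 1 / 2 < c) (hδ : 0 < δ) {Q : Finset (Finset (Fin k))}
    (hQ : ∀ B ∈ Q, B.Nonempty) : 0 ≤ partitionWeight c δ k Q := by
  have := prod_one_div_two_mul_card_sub_one_nonneg hc hQ
  have := Real.rpow_nonneg hδ.le ((#Q : ℝ) - 2 * k * c)
  unfold partitionWeight
  positivity

lemma partitionWeight_extendPartition_empty (hδ : 0 < δ) {Q : Finset (Finset (Fin k))}
    (hQ : ∅ ∉ Q) :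
    partitionWeight c δ (k + 1) (extendPartition Q ∅) =
      2⁻¹ * δ ^ (1 - 2 * c) / (2 * c - 1) * partitionWeight c δ k Q := by
  have hprod := prod_extendPartition Q ∅ fun m : ℕ => 1 / (2 * c * (m : ℝ) - 1)
  rw [erase_eq_of_notMem hQ, card_empty] at hprod
  have hexp : ((#Q + 1 : ℕ) : ℝ) - 2 * ((k + 1 : ℕ) : ℝ) * c =
      (#Q - 2 * k * c) + (1 - 2 * c) := by
    push_cast; ring
  rw [partitionWeight, partitionWeight, hprod, card_extendPartition, erase_eq_of_notMem hQ, hexp,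
    Real.rpow_add hδ, pow_succ]
  push_cast
  field_simp

lemma partitionWeight_extendPartition_le (hc : 1 / 2 < c) (hδ : 0 < δ)
    {Q : Finset (Finset (Fin k))} (hQ : ∀ B ∈ Q, B.Nonempty) {S : Finset (Fin k)} (hS : S ∈ Q) :
    partitionWeight c δ (k + 1) (extendPartition Q S) ≤
      δ ^ (-(2 * c)) * partitionWeight c δ k Q := by
  have hprod := prod_extendPartition Q S fun m : ℕ => 1 / (2 * c * (m : ℝ) - 1)
  have hcard : #(Q.erase S) + 1 = #Q := card_erase_add_one hS
  have hexp : ((#Q : ℕ) : ℝ) - 2 * ((k + 1 : ℕ) : ℝ) * c = (#Q - 2 * k * c) + -(2 * c) := by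
    push_cast; ring
  rw [partitionWeight, partitionWeight, hprod, card_extendPartition, hcard, hexp,
    Real.rpow_add hδ, ← mul_prod_erase Q _ hS]
  have := prod_one_div_two_mul_card_sub_one_nonneg (Q := Q.erase S) hc
    fun A hA => hQ A (mem_of_mem_erase hA)
  have := Real.rpow_nonneg hδ.le ((#Q : ℝ) - 2 * k * c)
  have := Real.rpow_nonneg hδ.le (-(2 * c))
  have hS1 := one_div_two_mul_succ_sub_one_le hc (card_pos.2 (hQ S hS))
  calc _ = (2 ^ #Q)⁻¹ * δ ^ ((#Q : ℝ) - 2 * k * c) * δ ^ (-(2 * c)) *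
        (∏ A ∈ Q.erase S, 1 / (2 * c * (#A : ℝ) - 1)) *
          (1 / (2 * c * ((#S + 1 : ℕ) : ℝ) - 1)) := by
        ring
    _ ≤ (2 ^ #Q)⁻¹ * δ ^ ((#Q : ℝ) - 2 * k * c) * δ ^ (-(2 * c)) *
        (∏ A ∈ Q.erase S, 1 / (2 * c * (#A : ℝ) - 1)) * (1 / (2 * c * (#S : ℝ) - 1)) := by
        gcongr
    _ = _ := by ring

end Weight

section Moment

variable {c δ : ℝ}

noncomputable def succRatioConst (c δ : ℝ) : ℝ :=
  max (2⁻¹ * δ ^ (1 - 2 * c) / (2 * c - 1)) (δ ^ (-(2 * c)))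

lemma succRatioConst_pos (hδ : 0 < δ) : 0 < succRatioConst c δ :=
  (Real.rpow_pos_of_pos hδ _).trans_le (le_max_right _ _)

lemma partitionWeight_extendPartition_le_succRatioConst (hc : 1 / 2 < c) (hδ : 0 < δ) {k : ℕ}
    {Q : Finset (Finset (Fin k))} (hQ : ∀ B ∈ Q, B.Nonempty) {S : Finset (Fin k)}
    (hS : S ∈ insert ∅ Q) :
    partitionWeight c δ (k + 1) (extendPartition Q S) ≤
      succRatioConst c δ * partitionWeight c δ k Q := by
  have := partitionWeight_nonneg hc hδ hQ
  rcases mem_insert.1 hS with rfl | hS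
  · rw [partitionWeight_extendPartition_empty hδ fun h => (hQ ∅ h).ne_empty rfl]
    gcongr
    exact le_max_left _ _
  · refine (partitionWeight_extendPartition_le hc hδ hQ hS).trans ?_
    gcongr
    exact le_max_right _ _

open scoped Classical in
noncomputable def setPartitions (k : ℕ) : Finset (Finset (Finset (Fin k))) :=
  {Q | IsSetPartition Q}

@[simp] lemma mem_setPartitions {k : ℕ} {Q : Finset (Finset (Fin k))} :
    Q ∈ setPartitions k ↔ IsSetPartition Q := by
  simp [setPartitions]

open scoped Classical in
lemma truncMoment_eq_sum (c δ : ℝ) (k : ℕ) :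
    truncMoment c δ k = 2 ^ k * ∑ Q ∈ setPartitions k, partitionWeight c δ k Q := by
  rw [truncMoment, setPartitions, sum_filter]
  rfl

lemma sum_partitionWeight_succ_le (hc : 1 / 2 < c) (hδ : 0 < δ) (k : ℕ) :
    ∑ P ∈ setPartitions (k + 1), partitionWeight c δ (k + 1) P ≤
      (k + 1) * succRatioConst c δ * ∑ Q ∈ setPartitions k, partitionWeight c δ k Q := by
  rw [← sum_fiberwise_of_maps_to (g := restrictPartition) fun P hP =>
    mem_setPartitions.2 (isSetPartition_restrictPartition (mem_setPartitions.1 hP)), mul_sum]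
  refine sum_le_sum fun Q hQ => ?_
  rw [mem_setPartitions] at hQ
  set fiber := {P ∈ setPartitions (k + 1) | restrictPartition P = Q}
  have hfiber : fiber ⊆ (insert ∅ Q).image (extendPartition Q) := by
    intro P hPfiber
    obtain ⟨hP, rfl⟩ := mem_filter.1 hPfiber
    replace hP := mem_setPartitions.1 hP
    exact mem_image.2 ⟨_, hP.lastBlockTrace_mem, hP.extendPartition_restrictPartition⟩
  have hcard : #fiber ≤ k + 1 :=
    calc #fiber ≤ #((insert ∅ Q).image (extendPartition Q)) := card_le_card hfiber
      _ ≤ #Q + 1 := card_image_le.trans (card_insert_le _ _)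
      _ ≤ k + 1 := by have := hQ.card_le; omega
  have hweight : ∀ P ∈ fiber, partitionWeight c δ (k + 1) P ≤
      succRatioConst c δ * partitionWeight c δ k Q := by
    intro P hP
    obtain ⟨S, hS, rfl⟩ := mem_image.1 (hfiber hP)
    exact partitionWeight_extendPartition_le_succRatioConst hc hδ hQ.1 hS
  have := mul_nonneg (succRatioConst_pos (c := c) hδ).le (partitionWeight_nonneg hc hδ hQ.1)
  calc ∑ P ∈ fiber, partitionWeight c δ (k + 1) P
      ≤ #fiber • (succRatioConst c δ * partitionWeight c δ k Q) :=
        sum_le_card_nsmul _ _ _ hweight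
    _ ≤ (k + 1) • (succRatioConst c δ * partitionWeight c δ k Q) := by gcongr
    _ = (k + 1) * succRatioConst c δ * partitionWeight c δ k Q := by
      rw [nsmul_eq_mul]; push_cast; ring

lemma truncMoment_nonneg (hc : 1 / 2 < c) (hδ : 0 < δ) (k : ℕ) : 0 ≤ truncMoment c δ k := by
  rw [truncMoment_eq_sum]
  exact mul_nonneg (by positivity)
    (sum_nonneg fun Q hQ => partitionWeight_nonneg hc hδ (mem_setPartitions.1 hQ).1)

lemma truncMoment_succ_le (hc : 1 / 2 < c) (hδ : 0 < δ) (k : ℕ) :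
    truncMoment c δ (k + 1) ≤ 2 * succRatioConst c δ * (k + 1) * truncMoment c δ k := by
  rw [truncMoment_eq_sum, truncMoment_eq_sum, pow_succ]
  calc _ ≤ 2 ^ k * 2 * ((k + 1) * succRatioConst c δ *
        ∑ Q ∈ setPartitions k, partitionWeight c δ k Q) := by
        gcongr
        exact sum_partitionWeight_succ_le hc hδ k
    _ = _ := by ring

end Moment

open Nat in
lemma summable_div_factorial_mul_pow_of_succ_le {a : ℕ → ℝ} (ha : ∀ k, 0 ≤ a k) {M : ℝ}
    (hM : 0 < M) (h : ∀ k, 1 ≤ k → a (k + 1) ≤ M * (k + 1) * a k) :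
    Summable fun k => a k / k ! * (2 * M)⁻¹ ^ k := by
  refine summable_of_ratio_norm_eventually_le (r := 2⁻¹) (by norm_num) ?_
  filter_upwards [Filter.eventually_ge_atTop 1] with k hk
  have := ha k
  have := ha (k + 1)
  rw [Real.norm_of_nonneg (by positivity), Real.norm_of_nonneg (by positivity), factorial_succ,
    pow_succ, cast_mul, cast_succ]
  calc a (k + 1) / ((k + 1) * k !) * ((2 * M)⁻¹ ^ k * (2 * M)⁻¹)
      ≤ M * (k + 1) * a k / ((k + 1) * k !) * ((2 * M)⁻¹ ^ k * (2 * M)⁻¹) := by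
        gcongr
        exact h k hk
    _ = 2⁻¹ * (a k / k ! * (2 * M)⁻¹ ^ k) := by
        field_simp

/-- there is a constant `M > 0` (depending only on `c` and `δ`) with
`a_{k+1} ≤ M (k+1) a_k` for all `k ≥ 1`; consequently the exponential generating series
`∑ (a_k / k!) t^k` has a positive (or infinite) radius of convergence. -/
theorem truncated_moment_ratio_bound
    (c δ : ℝ) (hc : 1 / 2 < c) (hδ : 0 < δ) :
    (∃ M : ℝ, 0 < M ∧ ∀ k : ℕ, 1 ≤ k →
      truncMoment c δ (k + 1) ≤ M * (k + 1) * truncMoment c δ k) ∧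
    (∃ t : ℝ, 0 < t ∧
      Summable fun k : ℕ => truncMoment c δ k / (Nat.factorial k : ℝ) * t ^ k) := by
  have hM : 0 < 2 * succRatioConst c δ := by linarith [succRatioConst_pos (c := c) hδ]
  have hratio : ∀ k : ℕ, 1 ≤ k →
      truncMoment c δ (k + 1) ≤ 2 * succRatioConst c δ * (k + 1) * truncMoment c δ k :=
    fun k _ => truncMoment_succ_le hc hδ k
  exact ⟨⟨_, hM, hratio⟩, _, by positivity,
    summable_div_factorial_mul_pow_of_succ_le (truncMoment_nonneg hc hδ) hM hratio⟩
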